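/- Let (z,w) ∈ ℂ^p × ℂ^q with (z,w) ≠ (0,0) and Φ̃(z,w) = 0, and define g : (0,∞) → ℝ by g(λ) := Φ̃(λ·z, λ⁻¹·w). Then g is differentiable at λ = 1 with g'(1) = 2·N(z,w) − 2·ε²·ρ(N(z,w))·ρ'(N(z,w)); in particular, since ρ ≥ 0 and ρ' ≤ 0, g'(1) ≥ 2·N(z,w) > 0. -/

import Mathlib

/-- The weighted square norm `|z|²_c = ∑ c_j |z_j|²` on `ℂ^n`. -/
noncomputable def wnorm {n : ℕ} (c : Fin n → ℕ) (z : Fin n → ℂ) : ℝ :=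
  ∑ j, (c j : ℝ) * ‖z j‖ ^ 2

/-- The function `μ(z,w) = |z|²_a − |w|²_b` on `ℂ^p × ℂ^q`. -/
noncomputable def mu {p q : ℕ} (a : Fin p → ℕ) (b : Fin q → ℕ)
    (x : (Fin p → ℂ) × (Fin q → ℂ)) : ℝ :=
  wnorm a x.1 - wnorm b x.2

/-- `N(z,w) = |z|²_a + |w|²_b`. -/
noncomputable def Nfun {p q : ℕ} (a : Fin p → ℕ) (b : Fin q → ℕ)
    (x : (Fin p → ℂ) × (Fin q → ℂ)) : ℝ :=
  wnorm a x.1 + wnorm b x.2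

/-- The perturbed moment map `Φ̃(z,w) = μ(z,w) + ε·ρ(N(z,w))`. -/
noncomputable def Phit {p q : ℕ} (a : Fin p → ℕ) (b : Fin q → ℕ) (ε : ℝ) (ρ : ℝ → ℝ)
    (x : (Fin p → ℂ) × (Fin q → ℂ)) : ℝ :=
  mu a b x + ε * ρ (Nfun a b x)


lemma wnorm_smul {n : ℕ} (c : Fin n → ℕ) (l : ℝ) (z : Fin n → ℂ) :
    wnorm c (l • z) = l ^ 2 * wnorm c z := by
  unfold wnorm
  rw [Finset.mul_sum]
  refine Finset.sum_congr rfl fun j _ => ?_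
  rw [Pi.smul_apply, norm_smul, Real.norm_eq_abs, mul_pow, sq_abs]
  ring

lemma wnorm_pos {n : ℕ} (c : Fin n → ℕ) (hc : ∀ j, 0 < c j) {z : Fin n → ℂ}
    (hz : z ≠ 0) : 0 < wnorm c z := by
  obtain ⟨j, hj⟩ := Function.ne_iff.mp hz
  refine Finset.sum_pos' (fun i _ => by positivity) ⟨j, Finset.mem_univ j, ?_⟩
  have hcj : (0:ℝ) < c j := by exact_mod_cast hc j
  have : 0 < ‖z j‖ := norm_pos_iff.mpr hj
  positivity

/-- For `(z,w) ≠ (0,0)` with `Φ̃(z,w) = 0`, the function `g(λ) = Φ̃(λ·z, λ⁻¹·w)`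
is differentiable at `λ = 1` with
`g'(1) = 2·N(z,w) − 2·ε²·ρ(N(z,w))·ρ'(N(z,w)) ≥ 2·N(z,w) > 0`. -/
theorem stmt_13 {p q : ℕ} (hp : 1 ≤ p) (hq : 1 ≤ q)
    (a : Fin p → ℕ) (b : Fin q → ℕ) (ha : ∀ j, 0 < a j) (hb : ∀ j, 0 < b j)
    (δ ε : ℝ) (hδ : 0 < δ) (hε : ε ≠ 0) (hεδ : |ε| < δ)
    (ρ : ℝ → ℝ) (hρ : ContDiff ℝ (⊤ : ℕ∞) ρ)
    (hρ0 : ∀ t, 0 ≤ ρ t) (hρ1 : ∀ t, ρ t ≤ 1)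
    (hρlt : ∀ t < δ, ρ t = 1) (hρgt : ∀ t, 2 * δ < t → ρ t = 0)
    (hρ' : ∀ t, deriv ρ t ≤ 0) (hερ' : ∀ t, |ε * deriv ρ t| < 1)
    (x : (Fin p → ℂ) × (Fin q → ℂ)) (hx : x ≠ (0, 0))
    (hx0 : Phit a b ε ρ x = 0) :
    HasDerivAt (fun l : ℝ => Phit a b ε ρ (l • x.1, l⁻¹ • x.2))
      (2 * Nfun a b x - 2 * ε ^ 2 * ρ (Nfun a b x) * deriv ρ (Nfun a b x)) 1 ∧
    2 * Nfun a b x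
      ≤ 2 * Nfun a b x - 2 * ε ^ 2 * ρ (Nfun a b x) * deriv ρ (Nfun a b x) ∧
    0 < 2 * Nfun a b x  := by
  set A := wnorm a x.1 with hAdef
  set B := wnorm b x.2 with hBdef
  have hA : 0 ≤ A := Finset.sum_nonneg fun j _ => by positivity
  have hB : 0 ≤ B := Finset.sum_nonneg fun j _ => by positivity
  have hN : 0 < A + B := by
    have : x.1 ≠ 0 ∨ x.2 ≠ 0 := by
      by_contra h
      push_neg at h
      exact hx (Prod.ext h.1 h.2)
    rcases this with h | h
    · linarith [wnorm_pos a ha h]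
    · linarith [wnorm_pos b hb h]
  have hNx : Nfun a b x = A + B := rfl
  have hfun : (fun l : ℝ => Phit a b ε ρ (l • x.1, l⁻¹ • x.2))
      = fun l : ℝ => (l ^ 2 * A - (l⁻¹) ^ 2 * B) + ε * ρ (l ^ 2 * A + (l⁻¹) ^ 2 * B) := by
    funext l
    simp [Phit, mu, Nfun, wnorm_smul]
    rfl
  have hsq : HasDerivAt (fun l : ℝ => l ^ 2) 2 1 := by
    simpa using hasDerivAt_pow 2 (1 : ℝ)
  have hinv : HasDerivAt (fun l : ℝ => l⁻¹) (-1) 1 := by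
    simpa using hasDerivAt_inv (one_ne_zero (α := ℝ))
  have hinvsq : HasDerivAt (fun l : ℝ => (l⁻¹) ^ 2) (-2) 1 := by
    refine (hinv.pow 2).congr_deriv ?_
    norm_num
  have hmu : HasDerivAt (fun l : ℝ => l ^ 2 * A - (l⁻¹) ^ 2 * B) (2 * A + 2 * B) 1 := by
    have := (hsq.mul_const A).sub (hinvsq.mul_const B)
    refine this.congr_deriv ?_
    ring
  have hNl : HasDerivAt (fun l : ℝ => l ^ 2 * A + (l⁻¹) ^ 2 * B) (2 * A - 2 * B) 1 := by
    have := (hsq.mul_const A).add (hinvsq.mul_const B)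
    refine this.congr_deriv ?_
    ring
  have hρd : HasDerivAt ρ (deriv ρ (A + B)) (A + B) :=
    ((hρ.differentiable (by simp)) (A + B)).hasDerivAt
  have hcomp : HasDerivAt (fun l : ℝ => ρ (l ^ 2 * A + (l⁻¹) ^ 2 * B))
      (deriv ρ (A + B) * (2 * A - 2 * B)) 1 := by
    have h1 : ((1:ℝ) ^ 2 * A + ((1:ℝ)⁻¹) ^ 2 * B) = A + B := by norm_num
    exact HasDerivAt.comp 1 (h1 ▸ hρd) hNl
  have htot := hmu.add (hcomp.const_mul ε)
  have hx0' : A - B = -(ε * ρ (A + B)) := by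
    have : A - B + ε * ρ (A + B) = 0 := hx0
    linarith
  constructor
  · rw [hfun, hNx]
    refine htot.congr_deriv (Eq.symm ?_)
    linear_combination (-2 * ε * deriv ρ (A + B)) * hx0'
  refine ⟨?_, by rw [hNx]; linarith⟩
  rw [hNx]
  have h1 : deriv ρ (A + B) ≤ 0 := hρ' _
  have h2 : 0 ≤ ρ (A + B) := hρ0 _
  nlinarith [mul_nonneg (mul_nonneg (sq_nonneg ε) h2) (neg_nonneg.mpr h1)]
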